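/- Let n ≥ 1 and d < n. For every affine subspace V of F_2^n of dimension k with k ≥ 2d, the complement of the Hamming ball satisfies |V ∩ {x : |x|_H > d}| ≥ 2^k − ∑_{a=0}^{d} binom(k, a). -/

import Mathlib

/-!
Choose a set `S` of at most `k` coordinates such that a vector of the direction of `V` vanishing
on `S` is zero. Two points of `V` that agree on `S` are then equal, and over `F_2` a point is
determined on `S` by its support there. So `x ↦ supp x ∩ S` embeds `V ∩ B_d` into the subsets
of `S` of size at most `d`, of which there are at most `∑_{a ≤ d} C(k, a)`.
-/

open Finset Module

namespace Submodule

def IsDeterminingSet {K ι : Type*} [Semiring K] (W : Submodule K (ι → K)) (S : Set ι) : Prop :=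
  ∀ x ∈ W, (∀ i ∈ S, x i = 0) → x = 0

theorem exists_isDeterminingSet_card_le_finrank {K ι : Type*} [DivisionRing K] [Finite ι]
    [DecidableEq ι] (W : Submodule K (ι → K)) :
    ∃ S : Finset ι, W.IsDeterminingSet S ∧ #S ≤ finrank K W := by
  induction h : finrank K W using Nat.strong_induction_on generalizing W with
  | _ k ih =>
  by_cases hbot : W = ⊥
  · exact ⟨∅, fun x hx _ => by simpa [hbot] using hx, Nat.zero_le _⟩
  obtain ⟨w, hwW, hw0⟩ := W.ne_bot_iff.mp hbot
  obtain ⟨i, hi⟩ : ∃ i, w i ≠ 0 := Function.ne_iff.mp hw0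
  -- Cutting `W` by the hyperplane `x i = 0` drops the dimension; then add `i` to `S`.
  set W' := W ⊓ LinearMap.ker (LinearMap.proj (R := K) (φ := fun _ : ι => K) i)
  have hlt : W' < W := inf_le_left.lt_of_ne fun hW => hi (by simpa using (hW.symm ▸ hwW).2)
  have hdim := Submodule.finrank_lt_finrank_of_lt hlt
  obtain ⟨S, hS, hcard⟩ := ih _ (h ▸ hdim) W' rfl
  refine ⟨insert i S, fun x hx hzero => hS x ⟨hx, by simpa using hzero i (by simp)⟩
    fun j hj => hzero j (by simp [hj]), ?_⟩
  exact (card_insert_le i S).trans (by omega)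

end Submodule

theorem Finset.card_powerset_filter_card_le {α : Type*} (s : Finset α) (d : ℕ) :
    #{t ∈ s.powerset | #t ≤ d} = ∑ a ∈ range (d + 1), (#s).choose a := by
  classical
  have hsplit : {t ∈ s.powerset | #t ≤ d} = (range (d + 1)).biUnion (powersetCard · s) := by
    ext t
    simp [mem_powersetCard, and_comm]
  rw [hsplit, card_biUnion fun a _ b _ hab => s.pairwise_disjoint_powersetCard hab]
  simp only [card_powersetCard]

theorem ZMod.two_eq_of_ne_zero_iff {a b : ZMod 2} : (a ≠ 0 ↔ b ≠ 0) → a = b := by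
  revert a b; decide

namespace AffineSubspace

theorem natCard_mk' {K V P : Type*} [Ring K] [AddCommGroup V] [Module K V] [AddTorsor V P]
    (p : P) (W : Submodule K V) : Nat.card (mk' p W) = Nat.card W :=
  Nat.card_congr <| (Equiv.vaddConst p).symm.subtypeEquiv fun _ => mem_mk'

theorem eq_of_eqOn_of_isDeterminingSet {K ι : Type*} [Ring K]
    {A : AffineSubspace K (ι → K)} {S : Set ι} (hS : A.direction.IsDeterminingSet S)
    {x y : ι → K} (hx : x ∈ A) (hy : y ∈ A) (hxy : Set.EqOn x y S) : x = y :=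
  sub_eq_zero.mp <| hS _ (A.vsub_mem_direction hx hy) fun _ hi => sub_eq_zero.mpr (hxy hi)

theorem ncard_inter_hammingNorm_le_le {ι : Type*} [Fintype ι]
    (A : AffineSubspace (ZMod 2) (ι → ZMod 2)) (d : ℕ) :
    ((A : Set (ι → ZMod 2)) ∩ {x | hammingNorm x ≤ d}).ncard ≤
      ∑ a ∈ range (d + 1), (finrank (ZMod 2) A.direction).choose a := by
  classical
  obtain ⟨S, hS, hcard⟩ := A.direction.exists_isDeterminingSet_card_le_finrank
  let supp (x : ι → ZMod 2) : Finset ι := {i ∈ S | x i ≠ 0}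
  let T : Finset (Finset ι) := {t ∈ S.powerset | #t ≤ d}
  set B := (A : Set (ι → ZMod 2)) ∩ {x | hammingNorm x ≤ d}
  have hmaps : ∀ x ∈ B, supp x ∈ (T : Set (Finset ι)) := by
    rintro x ⟨-, hx⟩
    simp only [T, coe_filter, mem_powerset, Set.mem_ofPred_eq]
    exact ⟨filter_subset _ _,
      (card_le_card (filter_subset_filter _ (subset_univ S))).trans hx⟩
  have hinj : Set.InjOn supp B :=
    fun x hx y hy hxy => eq_of_eqOn_of_isDeterminingSet hS hx.1 hy.1 fun i hi =>
      ZMod.two_eq_of_ne_zero_iff <| by simpa [supp, Finset.mem_coe.mp hi] using congr(i ∈ $hxy)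
  calc _ ≤ #T := (Set.ncard_le_ncard_of_injOn supp hmaps hinj).trans_eq (Set.ncard_coe_finset T)
    _ = ∑ a ∈ range (d + 1), (#S).choose a := card_powerset_filter_card_le S d
    _ ≤ _ := sum_le_sum fun a _ => Nat.choose_le_choose a hcard

end AffineSubspace

theorem stmt17_general (n d k : ℕ)
    (W : Submodule (ZMod 2) (Fin n → ZMod 2)) (hW : Module.finrank (ZMod 2) W = k)
    (v : Fin n → ZMod 2) :
    2 ^ k - ∑ a ∈ Finset.range (d + 1), Nat.choose k a ≤
      Nat.card {x : Fin n → ZMod 2 | (∃ w ∈ W, x = v + w) ∧ d < hammingNorm x} := by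
  set A := AffineSubspace.mk' v W
  have hset : {x : Fin n → ZMod 2 | (∃ w ∈ W, x = v + w) ∧ d < hammingNorm x} =
      (A : Set (Fin n → ZMod 2)) \ {x | hammingNorm x ≤ d} := by
    ext x
    simp [A, AffineSubspace.mem_mk', ← sub_eq_iff_eq_add']
  have hcard : (A : Set (Fin n → ZMod 2)).ncard = 2 ^ k := by
    rw [← Nat.card_coe_set_eq, SetLike.coe_sort_coe, AffineSubspace.natCard_mk',
      Module.natCard_eq_pow_finrank (K := ZMod 2), Nat.card_zmod, hW]
  have hball := A.ncard_inter_hammingNorm_le_le d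
  rw [AffineSubspace.direction_mk', hW] at hball
  have hsplit :=
    Set.ncard_inter_add_ncard_sdiff_eq_ncard (A : Set (Fin n → ZMod 2)) {x | hammingNorm x ≤ d}
  rw [hset, Nat.card_coe_set_eq]
  omega

/-- For an affine subspace `V` of dimension `k ≥ 2d` in `F_2^n` (with `d < n ≥ 1`),
`|V ∩ {x : |x|_H > d}| ≥ 2^k - ∑_{a=0}^d C(k,a)`. -/
theorem stmt17 (n d k : ℕ) (hn : 1 ≤ n) (hd : d < n) (hk : 2 * d ≤ k)
    (W : Submodule (ZMod 2) (Fin n → ZMod 2)) (hW : Module.finrank (ZMod 2) W = k)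
    (v : Fin n → ZMod 2) :
    2 ^ k - ∑ a ∈ Finset.range (d + 1), Nat.choose k a ≤
      Nat.card {x : Fin n → ZMod 2 | (∃ w ∈ W, x = v + w) ∧ d < hammingNorm x} :=
  stmt17_general n d k W hW v
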